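/- For every integer n ≥ 2 and every r ∈ [0, π), one has cos(r) · ∫₀^r sin^{n−1}(s) ds ≤ sin^n(r)/n. Consequently, for 0 < p ≤ n/(2n−2), the function k(r) = I₁′(r)² − 2p I₁(r) I₁″(r) is nonnegative on [0, π), where I₁(r) = n ω_n α₁ ∫₀^r sin^{n−1}(s) ds with any constants ω_n, α₁ > 0; hence l ↦ l^{1/p} G₁(l)^{−2} is nondecreasing, where G₁(l) = I₁′(I₁^{−1}(l)). -/

import Mathlib

/-! For `F(r) = sinⁿ r / n - cos r · ∫₀^r sin^{n-1}` one has `F(0) = 0` and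
`F'(r) = sin r · ∫₀^r sin^{n-1} ≥ 0` on `[0, π]`, which gives the first inequality.
Since `I₁'' = nωₙα₁ (n-1) sin^{n-2} cos`, the function `k` factors as
`(nωₙα₁)² sin^{n-2} r · (sinⁿ r - 2p(n-1) cos r ∫₀^r sin^{n-1})`, and `2p(n-1) ≤ n` makes the
last factor nonnegative: trivially where `cos r ≤ 0`, by the first inequality elsewhere.
Finally `l ↦ l^{1/p} G₁(l)⁻²` is `φ = I₁^{1/p} (I₁')⁻²` composed with the increasing `I₁⁻¹`,
and `φ' = I₁^{1/p-1} (I₁')⁻³ k / p ≥ 0`. -/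

open Real Set

noncomputable section

/-- `I₁(r) = n ωₙ α₁ ∫₀^r sin^{n-1}(s) ds`. -/
def Ione (n : ℕ) (ωn α₁ r : ℝ) : ℝ :=
  n * ωn * α₁ * ∫ s in (0 : ℝ)..r, Real.sin s ^ (n - 1)

/-- The inverse function of `I₁`. -/
def IoneInv (n : ℕ) (ωn α₁ l : ℝ) : ℝ := sInf {r : ℝ | 0 ≤ r ∧ l ≤ Ione n ωn α₁ r}

/-- `G₁ = I₁' ∘ I₁⁻¹`, defined on `[0, I₁(π))`. -/
def Gone (n : ℕ) (ωn α₁ l : ℝ) : ℝ := deriv (Ione n ωn α₁) (IoneInv n ωn α₁ l)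

theorem StrictMonoOn.sInf_setOf_le_eq {f : ℝ → ℝ} {a b r : ℝ} (hf : StrictMonoOn f (Icc a b))
    (hr : r ∈ Icc a b) : sInf {x | a ≤ x ∧ f r ≤ f x} = r := by
  refine IsLeast.csInf_eq ⟨⟨hr.1, le_rfl⟩, fun x ⟨hax, hx⟩ => ?_⟩
  by_contra! hxr
  exact (hf ⟨hax, hxr.le.trans hr.2⟩ hr hxr).not_ge hx

theorem MonotoneOn.image_of_strictMonoOn {f φ ψ : ℝ → ℝ} {s : Set ℝ} (hφ : MonotoneOn φ s)
    (hf : StrictMonoOn f s) (hψ : ∀ x ∈ s, ψ (f x) = φ x) : MonotoneOn ψ (f '' s) := by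
  rintro _ ⟨x, hx, rfl⟩ _ ⟨y, hy, rfl⟩ hxy
  rw [hψ x hx, hψ y hy]
  exact hφ hx hy ((hf.le_iff_le hx hy).1 hxy)

theorem HasDerivAt.rpow_one_div_mul_inv_sq {f g : ℝ → ℝ} {g' p x : ℝ} (hf : HasDerivAt f (g x) x)
    (hg : HasDerivAt g g' x) (hfx : 0 < f x) (hgx : g x ≠ 0) (hp : p ≠ 0) :
    HasDerivAt (fun y => f y ^ (1 / p) * (g y)⁻¹ ^ 2)
      (f x ^ (1 / p - 1) * (g x)⁻¹ ^ 3 / p * (g x ^ 2 - 2 * p * f x * g')) x := by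
  refine ((hf.rpow_const (p := 1 / p) (Or.inl hfx.ne')).mul ((hg.inv hgx).pow 2)).congr_deriv ?_
  have hsplit : f x ^ (1 / p) = f x ^ (1 / p - 1) * f x := by
    rw [← rpow_add_one hfx.ne', sub_add_cancel]
  simp only [Pi.pow_apply, Pi.inv_apply, hsplit, Nat.cast_ofNat, Nat.reduceSub, pow_one]
  field_simp
  ring

theorem hasDerivAt_integral_sin_pow (m : ℕ) (r : ℝ) :
    HasDerivAt (fun r => ∫ s in (0 : ℝ)..r, sin s ^ m) (sin r ^ m) r :=
  ((continuous_sin.pow m).integral_hasStrictDerivAt 0 r).hasDerivAt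

theorem integral_sin_pow_nonneg (m : ℕ) {r : ℝ} (hr : r ∈ Icc 0 π) :
    0 ≤ ∫ s in (0 : ℝ)..r, sin s ^ m :=
  intervalIntegral.integral_nonneg hr.1 fun _ hs =>
    pow_nonneg (sin_nonneg_of_nonneg_of_le_pi hs.1 (hs.2.trans hr.2)) _

theorem integral_sin_pow_pos_of_mem_Ioc (m : ℕ) {r : ℝ} (hr : r ∈ Ioc 0 π) :
    0 < ∫ s in (0 : ℝ)..r, sin s ^ m :=
  intervalIntegral.intervalIntegral_pos_of_pos_on ((continuous_sin.pow m).intervalIntegrable 0 r)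
    (fun _ hs => pow_pos (sin_pos_of_pos_of_lt_pi hs.1 (hs.2.trans_le hr.2)) _) hr.1

theorem cos_mul_integral_sin_pow_le {n : ℕ} (hn : n ≠ 0) {r : ℝ} (hr : r ∈ Icc 0 π) :
    cos r * ∫ s in (0 : ℝ)..r, sin s ^ (n - 1) ≤ sin r ^ n / n := by
  set F : ℝ → ℝ := fun r => sin r ^ n / n - cos r * ∫ s in (0 : ℝ)..r, sin s ^ (n - 1)
  have hF : ∀ x, HasDerivAt F (sin x * ∫ s in (0 : ℝ)..x, sin s ^ (n - 1)) x := fun x => by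
    refine ((((hasDerivAt_sin x).pow n).div_const (n : ℝ)).sub
      ((hasDerivAt_cos x).mul (hasDerivAt_integral_sin_pow (n - 1) x))).congr_deriv ?_
    field_simp
    ring
  have hmono : MonotoneOn F (Icc 0 π) :=
    monotoneOn_of_hasDerivWithinAt_nonneg (convex_Icc 0 π)
      (fun x _ => (hF x).continuousAt.continuousWithinAt)
      (fun x _ => (hF x).hasDerivWithinAt)
      fun x hx => by
        rw [interior_Icc] at hx
        exact mul_nonneg (sin_nonneg_of_nonneg_of_le_pi hx.1.le hx.2.le)
          (integral_sin_pow_nonneg _ (Ioo_subset_Icc_self hx))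
  have h := hmono (left_mem_Icc.2 pi_nonneg) hr hr.1
  simp only [F, sin_zero, zero_pow hn, zero_div, cos_zero, intervalIntegral.integral_same,
    mul_zero, sub_zero] at h
  linarith

theorem mul_cos_mul_integral_sin_pow_le {n : ℕ} (hn : n ≠ 0) {c r : ℝ} (hc₀ : 0 ≤ c)
    (hc : c ≤ n) (hr : r ∈ Icc 0 π) :
    c * (cos r * ∫ s in (0 : ℝ)..r, sin s ^ (n - 1)) ≤ sin r ^ n := by
  have hJ := integral_sin_pow_nonneg (n - 1) hr
  rcases le_or_gt (cos r) 0 with hcos | hcos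
  · exact (mul_nonpos_of_nonneg_of_nonpos hc₀ (mul_nonpos_of_nonpos_of_nonneg hcos hJ)).trans
      (pow_nonneg (sin_nonneg_of_nonneg_of_le_pi hr.1 hr.2) n)
  · have hn' : (0 : ℝ) < n := by positivity
    calc c * (cos r * ∫ s in (0 : ℝ)..r, sin s ^ (n - 1))
        ≤ n * (cos r * ∫ s in (0 : ℝ)..r, sin s ^ (n - 1)) :=
          mul_le_mul_of_nonneg_right hc (mul_nonneg hcos.le hJ)
      _ ≤ n * (sin r ^ n / n) :=
          mul_le_mul_of_nonneg_left (cos_mul_integral_sin_pow_le hn hr) hn'.le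
      _ = sin r ^ n := mul_div_cancel₀ _ hn'.ne'

section Ione

variable {n : ℕ} {ωn α₁ : ℝ}

theorem Ione_zero : Ione n ωn α₁ 0 = 0 := by
  simp [Ione]

theorem hasDerivAt_Ione (r : ℝ) :
    HasDerivAt (Ione n ωn α₁) (n * ωn * α₁ * sin r ^ (n - 1)) r :=
  (hasDerivAt_integral_sin_pow (n - 1) r).const_mul _

theorem continuous_Ione : Continuous (Ione n ωn α₁) :=
  continuous_iff_continuousAt.2 fun r => (hasDerivAt_Ione r).continuousAt

theorem deriv_Ione : deriv (Ione n ωn α₁) = fun r => n * ωn * α₁ * sin r ^ (n - 1) :=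
  funext fun r => (hasDerivAt_Ione r).deriv

theorem hasDerivAt_deriv_Ione (r : ℝ) :
    HasDerivAt (deriv (Ione n ωn α₁))
      (n * ωn * α₁ * ((n - 1 : ℕ) * sin r ^ (n - 2) * cos r)) r := by
  rw [deriv_Ione]
  simpa [Nat.sub_sub] using ((hasDerivAt_sin r).pow (n - 1)).const_mul ((n : ℝ) * ωn * α₁)

theorem Ione_pos (hC : 0 < (n : ℝ) * ωn * α₁) {r : ℝ} (hr : r ∈ Ioc 0 π) :
    0 < Ione n ωn α₁ r :=
  mul_pos hC (integral_sin_pow_pos_of_mem_Ioc _ hr)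

theorem Ione_nonneg (hC : 0 ≤ (n : ℝ) * ωn * α₁) {r : ℝ} (hr : r ∈ Icc 0 π) :
    0 ≤ Ione n ωn α₁ r :=
  mul_nonneg hC (integral_sin_pow_nonneg _ hr)

theorem deriv_Ione_pos (hC : 0 < (n : ℝ) * ωn * α₁) {r : ℝ} (hr : r ∈ Ioo 0 π) :
    0 < deriv (Ione n ωn α₁) r := by
  rw [deriv_Ione]
  exact mul_pos hC (pow_pos (sin_pos_of_pos_of_lt_pi hr.1 hr.2) _)

theorem strictMonoOn_Ione (hC : 0 < (n : ℝ) * ωn * α₁) : StrictMonoOn (Ione n ωn α₁) (Icc 0 π) :=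
  strictMonoOn_of_deriv_pos (convex_Icc 0 π) continuous_Ione.continuousOn fun x hx =>
    deriv_Ione_pos hC (by rwa [interior_Icc] at hx)

theorem deriv_Ione_sq_sub_eq (hn : 2 ≤ n) (p r : ℝ) :
    deriv (Ione n ωn α₁) r ^ 2 - 2 * p * Ione n ωn α₁ r * deriv (deriv (Ione n ωn α₁)) r
      = (n * ωn * α₁) ^ 2 * sin r ^ (n - 2) *
        (sin r ^ n - 2 * p * (n - 1 : ℕ) * (cos r * ∫ s in (0 : ℝ)..r, sin s ^ (n - 1))) := by
  have hpow : (sin r ^ (n - 1)) ^ 2 = sin r ^ (n - 2) * sin r ^ n := by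
    rw [← pow_mul, ← pow_add]
    congr 1
    omega
  rw [(hasDerivAt_deriv_Ione r).deriv, deriv_Ione, Ione]
  linear_combination ((n : ℝ) * ωn * α₁) ^ 2 * hpow

theorem deriv_Ione_sq_sub_nonneg (hn : 2 ≤ n) {p : ℝ} (hp : 0 ≤ p)
    (hpn : 2 * p * (n - 1 : ℕ) ≤ n) {r : ℝ} (hr : r ∈ Icc 0 π) :
    0 ≤ deriv (Ione n ωn α₁) r ^ 2 - 2 * p * Ione n ωn α₁ r * deriv (deriv (Ione n ωn α₁)) r := by
  rw [deriv_Ione_sq_sub_eq hn]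
  have hsin := sin_nonneg_of_nonneg_of_le_pi hr.1 hr.2
  have hgap := mul_cos_mul_integral_sin_pow_le (by omega) (by positivity) hpn hr
  exact mul_nonneg (by positivity) (sub_nonneg.2 hgap)

theorem IoneInv_Ione (hC : 0 < (n : ℝ) * ωn * α₁) {r : ℝ} (hr : r ∈ Icc 0 π) :
    IoneInv n ωn α₁ (Ione n ωn α₁ r) = r :=
  (strictMonoOn_Ione hC).sInf_setOf_le_eq hr

end Ione

theorem monotoneOn_Ione_rpow_mul_inv_deriv_sq {n : ℕ} {ωn α₁ p : ℝ} (hn : 2 ≤ n)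
    (hC : 0 < (n : ℝ) * ωn * α₁) (hp : 0 < p) (hpn : 2 * p * (n - 1 : ℕ) ≤ n) :
    MonotoneOn (fun r => Ione n ωn α₁ r ^ (1 / p) * (deriv (Ione n ωn α₁) r)⁻¹ ^ 2) (Ico 0 π) := by
  have hderiv : ∀ x ∈ Ioo 0 π, HasDerivAt
      (fun r => Ione n ωn α₁ r ^ (1 / p) * (deriv (Ione n ωn α₁) r)⁻¹ ^ 2)
      (Ione n ωn α₁ x ^ (1 / p - 1) * (deriv (Ione n ωn α₁) x)⁻¹ ^ 3 / p *
        (deriv (Ione n ωn α₁) x ^ 2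
          - 2 * p * Ione n ωn α₁ x * deriv (deriv (Ione n ωn α₁)) x)) x := fun x hx =>
    (hasDerivAt_Ione x).differentiableAt.hasDerivAt.rpow_one_div_mul_inv_sq
      (hasDerivAt_deriv_Ione x).differentiableAt.hasDerivAt
      (Ione_pos hC (Ioo_subset_Ioc_self hx)) (deriv_Ione_pos hC hx).ne' hp.ne'
  have hIoo : MonotoneOn _ (Ioo 0 π) :=
    monotoneOn_of_hasDerivWithinAt_nonneg (convex_Ioo 0 π)
      (fun x hx => (hderiv x hx).continuousAt.continuousWithinAt)
      (fun x hx => (hderiv x (interior_subset hx)).hasDerivWithinAt)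
      fun x hx => by
        rw [interior_Ioo] at hx
        have := Ione_pos hC (Ioo_subset_Ioc_self hx)
        have := deriv_Ione_pos hC hx
        exact mul_nonneg (by positivity)
          (deriv_Ione_sq_sub_nonneg hn hp.le hpn (Ioo_subset_Icc_self hx))
  -- At `r = 0` the value is `0 ^ (1 / p) * 0⁻¹ ^ 2 = 0`, below every other value.
  rw [← Ioo_insert_left pi_pos, monotoneOn_insert_iff]
  refine ⟨fun b hb hb0 => absurd hb.1 hb0.not_gt, fun b hb _ => ?_, hIoo⟩
  simp only [Ione_zero, zero_rpow (one_div_ne_zero hp.ne'), zero_mul]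
  exact mul_nonneg (rpow_nonneg (Ione_nonneg hC.le (Ioo_subset_Icc_self hb)) _) (sq_nonneg _)

/-- For every `n ≥ 2` and `r ∈ [0,π)`: `cos r · ∫₀^r sin^{n-1} ≤ sinⁿ r / n`.
Consequently, for `0 < p ≤ n/(2n-2)` the function
`k(r) = I₁'(r)² - 2p I₁(r) I₁''(r)` is nonnegative on `[0,π)`, and hence
`l ↦ l^{1/p} G₁(l)⁻²` is nondecreasing on `[0, I₁(π))`. -/
theorem cos_sin_integral_ineq_and_G_monotonicity (n : ℕ) (hn : 2 ≤ n) :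
    (∀ r ∈ Set.Ico (0 : ℝ) π,
        Real.cos r * ∫ s in (0 : ℝ)..r, Real.sin s ^ (n - 1) ≤ Real.sin r ^ n / n) ∧
      ∀ ωn α₁ : ℝ, 0 < ωn → 0 < α₁ → ∀ p : ℝ, 0 < p → p ≤ (n : ℝ) / (2 * n - 2) →
        (∀ r ∈ Set.Ico (0 : ℝ) π,
            0 ≤ deriv (Ione n ωn α₁) r ^ 2
                - 2 * p * Ione n ωn α₁ r * deriv (deriv (Ione n ωn α₁)) r) ∧
          MonotoneOn (fun l : ℝ => l ^ (1 / p) * ((Gone n ωn α₁ l)⁻¹) ^ 2)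
            (Set.Ico (0 : ℝ) (Ione n ωn α₁ π)) := by
  refine ⟨fun r hr => cos_mul_integral_sin_pow_le (by omega) (Ico_subset_Icc_self hr),
    fun ωn α₁ hω hα p hp hpn => ?_⟩
  have hn' : (2 : ℝ) ≤ n := by exact_mod_cast hn
  replace hpn : 2 * p * (n - 1 : ℕ) ≤ n := by
    rw [le_div_iff₀ (by linarith)] at hpn
    rw [Nat.cast_sub (by omega), Nat.cast_one]
    linarith
  refine ⟨fun r hr => deriv_Ione_sq_sub_nonneg hn hp.le hpn (Ico_subset_Icc_self hr), ?_⟩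
  have hC : 0 < (n : ℝ) * ωn * α₁ := by positivity
  refine ((monotoneOn_Ione_rpow_mul_inv_deriv_sq hn hC hp hpn).image_of_strictMonoOn
    ((strictMonoOn_Ione hC).mono Ico_subset_Icc_self) fun r hr => ?_).mono ?_
  · rw [Gone, IoneInv_Ione hC (Ico_subset_Icc_self hr)]
  · simpa only [Ione_zero] using intermediate_value_Ico pi_nonneg continuous_Ione.continuousOn

end
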